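/- arXiv:2401.04664 — 11 statements merged into one kernel-verified Lean document; each statement's English description precedes it below -/
import Mathlib

section
/- Let x, k, r be positive integers and let p be a prime. Then x^3 + (x+1)^3 + ... + (x+k-1)^3 = p^(2r) if and only if either there exists a positive integer c with x = p^(2c), k = 1 and r = 3c, or (x, k, p, r) = (1, 2, 3, 1). -/
/-! By Nicomachus' identity, with `a = ∑ i < x, i` and `d = x + ⋯ + (x + k - 1)`, the sum of
cubes is `(a + d)² - a² = d (d + 2a)`, and `2a = x (x - 1)`. If it equals `p^(2r)`, both factors
are powers of `p`, so `d` divides `x (x - 1)` and, by coprimality, divides `x` or `x - 1`. For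
`x ≥ 2` this gives `d ≤ x`, impossible once `k ≥ 2`. For `x = 1` it gives `k (k + 1) = 2 p^r`,
forcing `k = 2` and `p^r = 3`; for `k = 1` the equation `x³ = p^(2r)` forces `x = p^(2c)`,
`r = 3c`. -/

open Finset

theorem sum_range_pow_three_eq_sq_sum_range (n : ℕ) :
    ∑ i ∈ range n, i ^ 3 = (∑ i ∈ range n, i) ^ 2 := by
  induction n with
  | zero => simp
  | succ n ih =>
    have gauss := sum_range_id_mul_two n
    rw [sum_range_succ, sum_range_succ, ih]
    rcases n with _ | n
    · simp
    · simp only [Nat.add_sub_cancel] at gauss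
      nlinarith [gauss]

theorem sum_range_add_pow_three (x k : ℕ) :
    ∑ i ∈ range k, (x + i) ^ 3 =
      (∑ i ∈ range k, (x + i)) * (∑ i ∈ range k, (x + i) + x * (x - 1)) := by
  have nicomachus := sum_range_pow_three_eq_sq_sum_range (x + k)
  rw [sum_range_add, sum_range_add, sum_range_pow_three_eq_sq_sum_range] at nicomachus
  rw [← sum_range_id_mul_two x]
  apply Nat.add_left_cancel (n := (∑ i ∈ range x, i) ^ 2)
  rw [nicomachus]
  ring

theorem Nat.Prime.le_of_mul_add_mul_sub_one_eq_pow {p x d n : ℕ} (hp : p.Prime) (hx : 2 ≤ x)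
    (h : d * (d + x * (x - 1)) = p ^ n) : d ≤ x := by
  obtain ⟨s, -, rfl⟩ := (Nat.dvd_prime_pow hp).mp (Dvd.intro _ h)
  obtain ⟨t, -, ht⟩ := (Nat.dvd_prime_pow hp).mp (Dvd.intro_left _ h)
  have hdvd_add : p ^ s ∣ p ^ s + x * (x - 1) := by
    rw [ht]
    exact Nat.pow_dvd_pow p ((Nat.pow_le_pow_iff_right hp.one_lt).mp (ht ▸ Nat.le_add_right _ _))
  have hdvd : p ^ s ∣ (x - 1) * x := by
    rw [mul_comm]
    exact (Nat.dvd_add_right (dvd_refl _)).mp hdvd_add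
  have hcop : Nat.Coprime (x - 1) x := by
    have := Nat.coprime_self_add_right.mpr (Nat.coprime_one_right (x - 1))
    rwa [Nat.sub_add_cancel (by omega)] at this
  rcases s with _ | s
  · simpa using hx.trans' one_le_two
  · rcases (hcop.isPrimePow_dvd_mul (hp.isPrimePow.pow s.succ_ne_zero)).mp hdvd with h | h
    · exact (Nat.le_of_dvd (by omega) h).trans (Nat.sub_le x 1)
    · exact Nat.le_of_dvd (by omega) h

theorem Nat.Prime.eq_two_of_mul_add_one_eq_two_mul_pow {p k r : ℕ} (hp : p.Prime) (hr : 0 < r)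
    (h : k * (k + 1) = 2 * p ^ r) : k = 2 ∧ p ^ r = 3 := by
  have hpr : 2 ≤ p ^ r := hp.two_le.trans (Nat.le_self_pow hr.ne' p)
  have hdvd : p ^ r ∣ k * (k + 1) := Dvd.intro_left 2 h.symm
  rcases (Nat.coprime_self_add_right.mpr (Nat.coprime_one_right k)).isPrimePow_dvd_mul
    (hp.isPrimePow.pow hr.ne') |>.mp hdvd with hk | hk
  · have : p ^ r ≤ k := Nat.le_of_dvd (by nlinarith) hk
    nlinarith
  · have : p ^ r ≤ k + 1 := Nat.le_of_dvd (by omega) hk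
    have : k ≤ 2 := by nlinarith
    interval_cases k <;> omega

theorem Nat.Prime.exists_eq_pow_two_mul_of_pow_three_eq {p x r : ℕ} (hp : p.Prime)
    (h : x ^ 3 = p ^ (2 * r)) : ∃ c, x = p ^ (2 * c) ∧ r = 3 * c := by
  obtain ⟨m, -, rfl⟩ := (Nat.dvd_prime_pow hp).mp (Dvd.intro (x ^ 2) (by rw [← h]; ring))
  rw [← pow_mul] at h
  have hm : m * 3 = 2 * r := Nat.pow_right_injective hp.two_le h
  exact ⟨m / 2, by rw [show 2 * (m / 2) = m by omega], by omega⟩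

theorem sum_consecutive_cubes_eq_prime_power_sq (x k r p : ℕ) (hx : 0 < x) (hk : 0 < k)
    (hr : 0 < r) (hp : p.Prime) :
    (∑ i ∈ Finset.range k, (x + i) ^ 3 = p ^ (2 * r)) ↔
      ((∃ c : ℕ, 0 < c ∧ x = p ^ (2 * c) ∧ k = 1 ∧ r = 3 * c) ∨
        (x = 1 ∧ k = 2 ∧ p = 3 ∧ r = 1)) := by
  constructor
  · intro h
    obtain rfl | hk2 : k = 1 ∨ 2 ≤ k := by omega
    · obtain ⟨c, rfl, rfl⟩ := hp.exists_eq_pow_two_mul_of_pow_three_eq (by simpa using h)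
      exact Or.inl ⟨c, by omega, rfl, rfl, rfl⟩
    rw [sum_range_add_pow_three] at h
    obtain rfl | hx2 : x = 1 ∨ 2 ≤ x := by omega
    · rw [Nat.sub_self, mul_zero, add_zero] at h
      have hd : ∑ i ∈ range k, (1 + i) = p ^ r :=
        Nat.pow_left_injective two_ne_zero (show _ ^ 2 = _ ^ 2 by rw [sq, h, ← pow_mul, mul_comm])
      have gauss := sum_range_id_mul_two (k + 1)
      rw [sum_range_succ', Nat.add_sub_cancel] at gauss
      simp only [add_comm _ 1, hd] at gauss
      obtain ⟨rfl, h3⟩ := hp.eq_two_of_mul_add_one_eq_two_mul_pow (k := k) hr (by linarith)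
      obtain ⟨rfl, rfl⟩ := Nat.prime_three.pow_eq_iff.mp h3
      exact Or.inr ⟨rfl, rfl, rfl, rfl⟩
    · have hle := hp.le_of_mul_add_mul_sub_one_eq_pow hx2 h
      have : x + 1 ≤ ∑ i ∈ range k, (x + i) :=
        single_le_sum (f := fun i ↦ x + i) (by simp) (mem_range.mpr hk2)
      omega
  · rintro (⟨c, -, rfl, rfl, rfl⟩ | ⟨rfl, rfl, rfl, rfl⟩)
    · rw [sum_range_one, add_zero, ← pow_mul]
      ring_nf
    · decide
end

section
/- For all positive integers x and k with k even, the integer 2x + k − 1 divides ∑_{i=x}^{x+k-1} i^3. -/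
/-!
Pair the term `x + i` with its mirror image `x + (k - 1 - i)`: the two add up to `2x + k - 1`,
and `a + b ∣ a ^ p + b ^ p` for odd `p`, so `2x + k - 1` divides twice the sum. When `k` is
even and positive, `2x + k - 1` is odd, so the factor `2` can be cancelled.
-/

open Finset

theorem two_nsmul_sum_range_eq_sum_add_reflect {M : Type*} [AddCommMonoid M] (f : ℕ → M) (k : ℕ) :
    2 • ∑ i ∈ range k, f i = ∑ i ∈ range k, (f i + f (k - 1 - i)) := by
  rw [sum_add_distrib, two_nsmul, sum_range_reflect]

theorem two_mul_add_sub_one_dvd_two_mul_sum_range_pow {p : ℕ} (hp : Odd p) (x k : ℕ) :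
    2 * x + k - 1 ∣ 2 * ∑ i ∈ range k, (x + i) ^ p := by
  rw [← smul_eq_mul _ (∑ i ∈ range k, _), two_nsmul_sum_range_eq_sum_add_reflect]
  refine dvd_sum fun i hi => ?_
  have hpair : x + i + (x + (k - 1 - i)) = 2 * x + k - 1 := by
    have := mem_range.mp hi
    omega
  exact hpair ▸ hp.nat_add_dvd_pow_add_pow _ _

theorem two_mul_add_sub_one_dvd_sum_range_pow_of_even {p : ℕ} (hp : Odd p) (x : ℕ) {k : ℕ}
    (hk : Even k) : 2 * x + k - 1 ∣ ∑ i ∈ range k, (x + i) ^ p := by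
  rcases Nat.eq_zero_or_pos k with rfl | hk_pos
  · simp
  obtain ⟨m, rfl⟩ := hk
  have hodd : Odd (2 * x + (m + m) - 1) := ⟨x + m - 1, by omega⟩
  exact hodd.coprime_two_right.dvd_of_dvd_mul_left
    (two_mul_add_sub_one_dvd_two_mul_sum_range_pow hp x (m + m))

theorem dvd_sum_consecutive_cubes_of_even_general (x k : ℕ)
    (hke : Even k) : (2 * x + k - 1) ∣ ∑ i ∈ Finset.range k, (x + i) ^ 3 :=
  two_mul_add_sub_one_dvd_sum_range_pow_of_even (by decide) x hke

theorem dvd_sum_consecutive_cubes_of_even (x k : ℕ) (hx : 0 < x) (hk : 0 < k)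
    (hke : Even k) : (2 * x + k - 1) ∣ ∑ i ∈ Finset.range k, (x + i) ^ 3 :=
  dvd_sum_consecutive_cubes_of_even_general x k hke
end

section
/- For all positive integers x and k with k odd, the integer 2x + k − 1 is even and (2x + k − 1)/2 divides ∑_{i=x}^{x+k-1} i^3. -/
/-!
Write the odd length as `k = 2j + 1`, so that `(2x + k - 1) / 2 = x + j` is the middle term `m`
of the run `x, …, x + 2j`. Pairing terms symmetrically about `m` gives
`(m - t)³ + (m + t)³ = 2m³ + 6mt²`, a multiple of `m`, and the middle cube is one too.
-/

section

variable {R : Type*} [CommSemiring R] (x : R) (j : ℕ)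

theorem sum_range_odd_add_pow_three :
    ∑ i ∈ Finset.range (2 * j + 1), (x + i) ^ 3
      = (x + j) * ((2 * j + 1) * ((x + j) ^ 2 + j * (j + 1))) := by
  induction j with
  | zero => simp; ring
  | succ j ih =>
    rw [show 2 * (j + 1) + 1 = 2 * j + 1 + 1 + 1 by ring, Finset.sum_range_succ,
      Finset.sum_range_succ, ih]
    push_cast
    ring

theorem middle_dvd_sum_range_odd_add_pow_three :
    x + j ∣ ∑ i ∈ Finset.range (2 * j + 1), (x + i) ^ 3 :=
  Dvd.intro _ (sum_range_odd_add_pow_three x j).symm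

end

theorem half_dvd_sum_consecutive_cubes_of_odd_general (x k : ℕ)
    (hko : Odd k) :
    Even (2 * x + k - 1) ∧ (2 * x + k - 1) / 2 ∣ ∑ i ∈ Finset.range k, (x + i) ^ 3 := by
  obtain ⟨j, rfl⟩ := hko
  have hmiddle : (2 * x + (2 * j + 1) - 1) / 2 = x + j := by omega
  refine ⟨⟨x + j, by omega⟩, hmiddle ▸ ?_⟩
  simpa using middle_dvd_sum_range_odd_add_pow_three x j

theorem half_dvd_sum_consecutive_cubes_of_odd (x k : ℕ) (hx : 0 < x) (hk : 0 < k)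
    (hko : Odd k) :
    Even (2 * x + k - 1) ∧ (2 * x + k - 1) / 2 ∣ ∑ i ∈ Finset.range k, (x + i) ^ 3 :=
  half_dvd_sum_consecutive_cubes_of_odd_general x k hko
end

section
/- Let m be an odd positive integer and let x, k be positive integers. If k is even, then 2x + k − 1 divides ∑_{i=x}^{x+k-1} i^m; if k is odd, then 2x + k − 1 is even and (2x + k − 1)/2 divides ∑_{i=x}^{x+k-1} i^m. -/
/-!
Pairing the `i`-th term with the `(k - 1 - i)`-th one, each pair is `a ^ m + b ^ m` with
`a + b = 2 * x + k - 1`, which is divisible by `a + b` since `m` is odd. Hence `2 * x + k - 1`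
divides twice the sum, and the two parities of `2 * x + k - 1` give the two claims.
-/

open Finset

theorem dvd_two_mul_sum_range_of_dvd_add_reflect {R : Type*} [CommSemiring R] {d : R}
    {f : ℕ → R} {n : ℕ} (h : ∀ i < n, d ∣ f i + f (n - 1 - i)) :
    d ∣ 2 * ∑ i ∈ range n, f i := by
  rw [two_mul]
  nth_rw 2 [← sum_range_reflect]
  rw [← sum_add_distrib]
  exact dvd_sum fun i hi => h i (mem_range.mp hi)

theorem Odd.dvd_two_mul_sum_range_pow {m : ℕ} (hm : Odd m) (x n : ℕ) :
    2 * x + n ∣ 2 * ∑ i ∈ range (n + 1), (x + i) ^ m := by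
  refine dvd_two_mul_sum_range_of_dvd_add_reflect fun i hi => ?_
  have hpair : (x + i) + (x + (n + 1 - 1 - i)) = 2 * x + n := by omega
  exact hpair ▸ hm.nat_add_dvd_pow_add_pow _ _

theorem dvd_sum_consecutive_odd_powers_general (m x k : ℕ) (hmo : Odd m) (hk : 0 < k) :
    (Even k → (2 * x + k - 1) ∣ ∑ i ∈ Finset.range k, (x + i) ^ m) ∧
      (Odd k → Even (2 * x + k - 1) ∧
        (2 * x + k - 1) / 2 ∣ ∑ i ∈ Finset.range k, (x + i) ^ m) := by
  obtain ⟨n, rfl⟩ : ∃ n, k = n + 1 := Nat.exists_eq_add_one.mpr hk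
  have hN : 2 * x + (n + 1) - 1 = 2 * x + n := by omega
  have hdvd := hmo.dvd_two_mul_sum_range_pow x n
  rw [hN]
  constructor
  · intro hke
    have hodd : Odd (2 * x + n) := by
      rw [Nat.even_add_one, ← Nat.not_odd_iff_even, not_not] at hke
      exact (even_two_mul x).add_odd hke
    exact hodd.coprime_two_right.dvd_of_dvd_mul_left hdvd
  · intro hko
    have heven : Even (2 * x + n) := by
      rw [Nat.odd_add_one, Nat.not_odd_iff_even] at hko
      exact (even_two_mul x).add hko
    exact ⟨heven, (Nat.div_dvd_iff_dvd_mul heven.two_dvd two_pos).mpr hdvd⟩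

theorem dvd_sum_consecutive_odd_powers (m x k : ℕ) (hm : 0 < m) (hmo : Odd m)
    (hx : 0 < x) (hk : 0 < k) :
    (Even k → (2 * x + k - 1) ∣ ∑ i ∈ Finset.range k, (x + i) ^ m) ∧
      (Odd k → Even (2 * x + k - 1) ∧
        (2 * x + k - 1) / 2 ∣ ∑ i ∈ Finset.range k, (x + i) ^ m) :=
  dvd_sum_consecutive_odd_powers_general m x k hmo hk
end

section
/- Let x > 1 and k be positive integers with k even, let p be a prime and r a positive integer. If ∑_{i=x}^{x+k-1} i^3 = p^(2r), then there exists an integer t with 0 < t < 2r such that 2x + k − 1 = p^t. -/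
/-! For even `k = 2(a+1)` the sum of cubes factors as
`(2x + k - 1) · (a+1)(x² + (2a+1)x + (a+1)(2a+1))` (it is a difference of squares of two
triangular numbers). Both factors exceed `1`, so `2x + k - 1` is a divisor of the prime power
`p ^ (2r)` other than `1` and `p ^ (2r)`, hence equals `p ^ t` with `0 < t < 2r`. -/

theorem Nat.exists_eq_pow_of_mul_eq_prime_pow {p a b s : ℕ} (hp : p.Prime) (ha : 1 < a)
    (hb : 1 < b) (h : a * b = p ^ s) : ∃ t, 0 < t ∧ t < s ∧ a = p ^ t := by
  obtain ⟨t, hts, rfl⟩ := (Nat.dvd_prime_pow hp).1 (Dvd.intro b h)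
  refine ⟨t, Nat.pos_of_ne_zero ?_, lt_of_le_of_ne hts ?_, rfl⟩
  · rintro rfl
    simp at ha
  · rintro rfl
    have : p ^ t * b = p ^ t * 1 := by rw [h, mul_one]
    have := Nat.eq_of_mul_eq_mul_left (pow_pos hp.pos t) this
    omega

theorem sum_range_add_cube_two_mul_succ (x a : ℕ) :
    ∑ i ∈ Finset.range (2 * (a + 1)), (x + i) ^ 3 =
      (2 * x + 2 * a + 1) * ((a + 1) * (x ^ 2 + (2 * a + 1) * x + (a + 1) * (2 * a + 1))) := by
  induction a with
  | zero => simp only [Finset.sum_range_succ, Finset.sum_range_zero]; ring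
  | succ a ih =>
    rw [show 2 * (a + 1 + 1) = 2 * (a + 1) + 1 + 1 by ring, Finset.sum_range_succ,
      Finset.sum_range_succ, ih]
    ring

theorem exists_t_of_even_k_general (x k p r : ℕ) (hx : 1 < x) (hk : 0 < k) (hke : Even k)
    (hp : p.Prime)
    (hsum : ∑ i ∈ Finset.range k, (x + i) ^ 3 = p ^ (2 * r)) :
    ∃ t : ℕ, 0 < t ∧ t < 2 * r ∧ 2 * x + k - 1 = p ^ t := by
  obtain ⟨a, rfl⟩ : ∃ a, k = 2 * (a + 1) := by
    obtain ⟨b, rfl⟩ := hke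
    exact ⟨b - 1, by omega⟩
  rw [sum_range_add_cube_two_mul_succ] at hsum
  have hcofactor : 1 < (a + 1) * (x ^ 2 + (2 * a + 1) * x + (a + 1) * (2 * a + 1)) :=
    calc 1 < x ^ 2 := Nat.one_lt_pow two_ne_zero hx
      _ ≤ x ^ 2 + (2 * a + 1) * x + (a + 1) * (2 * a + 1) := by omega
      _ ≤ _ := Nat.le_mul_of_pos_left _ a.succ_pos
  obtain ⟨t, ht0, htr, hpow⟩ :=
    Nat.exists_eq_pow_of_mul_eq_prime_pow hp (by omega) hcofactor hsum
  exact ⟨t, ht0, htr, by omega⟩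

theorem exists_t_of_even_k (x k p r : ℕ) (hx : 1 < x) (hk : 0 < k) (hke : Even k)
    (hp : p.Prime) (hr : 0 < r)
    (hsum : ∑ i ∈ Finset.range k, (x + i) ^ 3 = p ^ (2 * r)) :
    ∃ t : ℕ, 0 < t ∧ t < 2 * r ∧ 2 * x + k - 1 = p ^ t :=
  exists_t_of_even_k_general x k p r hx hk hke hp hsum
end

section
/- Let x > 1 and k be positive integers with k odd, let p be a prime and r a positive integer. If ∑_{i=x}^{x+k-1} i^3 = p^(2r), then there exists an integer t with 0 < t < 2r such that 2x + k − 1 = 2·p^t. -/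
/-!
Write `k = 2h + 1` and let `m = x + h` be the middle term. Pairing `m - j` with `m + j` gives
`∑ (x + i)³ = k · m · (m² + h(h + 1))`, so `m` is a proper divisor of `p^(2r)` exceeding `1`,
hence `m = p^t` with `0 < t < 2r`; and `2x + k - 1 = 2m`.
-/

theorem sum_range_add_cube_two_mul_add_one (x h : ℕ) :
    ∑ i ∈ Finset.range (2 * h + 1), (x + i) ^ 3
      = (2 * h + 1) * (x + h) * ((x + h) ^ 2 + h * (h + 1)) := by
  induction h with
  | zero => simp; ring
  | succ h ih =>
    rw [show 2 * (h + 1) + 1 = 2 * h + 1 + 1 + 1 by ring, Finset.sum_range_succ,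
      Finset.sum_range_succ, ih]
    ring

theorem Nat.exists_pos_lt_of_dvd_prime_pow {p m n : ℕ} (hp : p.Prime) (hdvd : m ∣ p ^ n)
    (hm : 2 ≤ m) (hlt : m < p ^ n) : ∃ t, 0 < t ∧ t < n ∧ m = p ^ t := by
  obtain ⟨t, -, rfl⟩ := (Nat.dvd_prime_pow hp).mp hdvd
  refine ⟨t, Nat.pos_of_ne_zero ?_, (Nat.pow_lt_pow_iff_right hp.one_lt).mp hlt, rfl⟩
  rintro rfl
  simp at hm

theorem exists_t_of_odd_k_general (x k p r : ℕ) (hx : 1 < x) (hko : Odd k)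
    (hp : p.Prime)
    (hsum : ∑ i ∈ Finset.range k, (x + i) ^ 3 = p ^ (2 * r)) :
    ∃ t : ℕ, 0 < t ∧ t < 2 * r ∧ 2 * x + k - 1 = 2 * p ^ t := by
  obtain ⟨h, rfl⟩ := hko
  rw [sum_range_add_cube_two_mul_add_one] at hsum
  have hm : 2 ≤ x + h := by omega
  have hdvd : x + h ∣ p ^ (2 * r) := hsum ▸ (dvd_mul_left _ _).mul_right _
  have hlt : x + h < p ^ (2 * r) := by
    rw [← hsum]
    calc x + h < (x + h) * (x + h) ^ 2 := lt_mul_of_one_lt_right (by omega) (by nlinarith)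
      _ ≤ (x + h) * ((x + h) ^ 2 + h * (h + 1)) := Nat.mul_le_mul_left _ (Nat.le_add_right _ _)
      _ ≤ (2 * h + 1) * (x + h) * ((x + h) ^ 2 + h * (h + 1)) := by
        rw [mul_assoc]
        exact Nat.le_mul_of_pos_left _ (Nat.succ_pos _)
  obtain ⟨t, ht0, htr, hmt⟩ := Nat.exists_pos_lt_of_dvd_prime_pow hp hdvd hm hlt
  exact ⟨t, ht0, htr, by omega⟩

theorem exists_t_of_odd_k (x k p r : ℕ) (hx : 1 < x) (hk : 0 < k) (hko : Odd k)
    (hp : p.Prime) (hr : 0 < r)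
    (hsum : ∑ i ∈ Finset.range k, (x + i) ^ 3 = p ^ (2 * r)) :
    ∃ t : ℕ, 0 < t ∧ t < 2 * r ∧ 2 * x + k - 1 = 2 * p ^ t :=
  exists_t_of_odd_k_general x k p r hx hko hp hsum
end

section
/- There are no positive integers x > 1, k even, prime p and positive integer r such that ∑_{i=x}^{x+k-1} i^3 = p^(2r). -/
/-!
Write `x = a + 1` and `k = 2m`. By Nicomachus the sum is `T(a+2m)² - T(a)²` with `T` the
triangular numbers, so it factors as `d * (d + a(a+1))` with `d = m(2a+2m+1) = T(a+2m) - T(a)`.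
If the product is a power of the prime `p`, both factors are, hence `d` divides the difference
`a(a+1)`; as `a` and `a+1` are coprime, the prime power `d` divides one of them, so `d ≤ a + 1`.
But `d ≥ 2a + 3` as soon as `m ≥ 1`.
-/

open Finset

lemma sum_range_two_mul_cube_succ_add (a m : ℕ) :
    ∑ i ∈ range (2 * m), (a + 1 + i) ^ 3 =
      m * (2 * a + 2 * m + 1) * (m * (2 * a + 2 * m + 1) + a * (a + 1)) := by
  induction m with
  | zero => simp
  | succ m ih =>
    rw [show 2 * (m + 1) = 2 * m + 1 + 1 by ring, sum_range_succ, sum_range_succ, ih]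
    ring

lemma Nat.Prime.pow_le_succ_of_pow_dvd_mul_succ {p i a : ℕ} (hp : p.Prime)
    (h : p ^ i ∣ a * (a + 1)) (ha : 0 < a) : p ^ i ≤ a + 1 := by
  rcases Nat.eq_zero_or_pos i with rfl | hi
  · simp
  rcases (Nat.coprime_self_add_right.mpr (Nat.coprime_one_right a)).isPrimePow_dvd_mul
      (hp.isPrimePow.pow hi.ne') |>.mp h with hdvd | hdvd
  · exact (Nat.le_of_dvd ha hdvd).trans a.le_succ
  · exact Nat.le_of_dvd a.succ_pos hdvd

lemma Nat.Prime.mul_add_mul_succ_ne_pow {p a d n : ℕ} (hp : p.Prime) (ha : 0 < a)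
    (hd : a + 1 < d) : d * (d + a * (a + 1)) ≠ p ^ n := by
  intro h
  obtain ⟨j, -, hj⟩ := (Nat.dvd_prime_pow hp).mp (Dvd.intro_left _ h)
  obtain ⟨i, -, rfl⟩ := (Nat.dvd_prime_pow hp).mp (Dvd.intro _ h)
  have hij : i ≤ j := by
    refine (Nat.pow_lt_pow_iff_right hp.one_lt).mp ?_ |>.le
    have : 0 < a * (a + 1) := by positivity
    omega
  have hdvd : p ^ i ∣ a * (a + 1) := by
    rw [← Nat.dvd_add_right dvd_rfl, hj]
    exact pow_dvd_pow p hij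
  have := hp.pow_le_succ_of_pow_dvd_mul_succ hdvd ha
  omega

theorem no_solution_even_k_general (x k p r : ℕ) (hx : 1 < x) (hke : Even k)
    (hp : p.Prime) :
    ∑ i ∈ Finset.range k, (x + i) ^ 3 ≠ p ^ (2 * r) := by
  obtain ⟨m, rfl⟩ := hke
  obtain ⟨a, rfl⟩ : ∃ a, x = a + 1 := ⟨x - 1, by omega⟩
  rw [← two_mul, sum_range_two_mul_cube_succ_add]
  rcases Nat.eq_zero_or_pos m with rfl | hm
  · simpa using (pow_pos hp.pos (2 * r)).ne
  exact hp.mul_add_mul_succ_ne_pow (by omega) (by nlinarith)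

theorem no_solution_even_k (x k p r : ℕ) (hx : 1 < x) (hk : 0 < k) (hke : Even k)
    (hp : p.Prime) (hr : 0 < r) :
    ∑ i ∈ Finset.range k, (x + i) ^ 3 ≠ p ^ (2 * r) :=
  no_solution_even_k_general x k p r hx hke hp
end

section
/- Let x > 1 and k be positive integers with k odd, let p be a prime and r a positive integer. If ∑_{i=x}^{x+k-1} i^3 = p^(2r), then k = 1 and there exists a positive integer c such that x = p^(2c) and r = 3c. -/
/-!
Write `k = 2t + 1` and `m = x + t` for the middle term. Then the sum of cubes factors as
`k · m · (m² + t(t+1))`. For `t ≥ 1` all three factors exceed `1`, so a prime `p` whose power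
is the sum divides each of them, hence divides `k` and `t(t+1)`; but these are coprime since
`k² = 4t(t+1) + 1`. So `k = 1`, `x³ = p^(2r)`, and `x = p^a` with `3a = 2r`, forcing `a` even.
-/

lemma sum_range_two_mul_add_one_add_pow_three (x t : ℕ) :
    ∑ i ∈ Finset.range (2 * t + 1), (x + i) ^ 3
      = (2 * t + 1) * (x + t) * ((x + t) ^ 2 + t * (t + 1)) := by
  induction t with
  | zero => simp; ring
  | succ n ih =>
    rw [show 2 * (n + 1) + 1 = 2 * n + 1 + 1 + 1 by ring,
      Finset.sum_range_succ, Finset.sum_range_succ, ih]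
    ring

lemma coprime_two_mul_add_one_mul_add_one (t : ℕ) : Nat.Coprime (2 * t + 1) (t * (t + 1)) :=
  Nat.isCoprime_iff_coprime.mp ⟨2 * t + 1, -4, by push_cast; ring⟩

lemma Nat.Prime.dvd_of_dvd_pow_of_one_lt {p d n : ℕ} (hp : p.Prime) (hd : 1 < d)
    (h : d ∣ p ^ n) : p ∣ d := by
  obtain ⟨i, -, rfl⟩ := (Nat.dvd_prime_pow hp).mp h
  have hi : i ≠ 0 := by rintro rfl; simp at hd
  exact dvd_pow_self p hi

lemma sum_range_two_mul_add_one_add_pow_three_ne_prime_pow {x t p n : ℕ} (hx : 0 < x)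
    (ht : 0 < t) (hp : p.Prime) :
    ∑ i ∈ Finset.range (2 * t + 1), (x + i) ^ 3 ≠ p ^ n := by
  intro hsum
  rw [sum_range_two_mul_add_one_add_pow_three] at hsum
  have p_dvd {d : ℕ} (hd : 1 < d)
      (h : d ∣ (2 * t + 1) * (x + t) * ((x + t) ^ 2 + t * (t + 1))) : p ∣ d :=
    hp.dvd_of_dvd_pow_of_one_lt hd (hsum ▸ h)
  have p_dvd_k : p ∣ 2 * t + 1 := p_dvd (by omega) (dvd_mul_of_dvd_left (dvd_mul_right _ _) _)
  have p_dvd_m : p ∣ x + t := p_dvd (by omega) (dvd_mul_of_dvd_left (dvd_mul_left _ _) _)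
  have p_dvd_q : p ∣ (x + t) ^ 2 + t * (t + 1) := p_dvd (by nlinarith) (dvd_mul_left _ _)
  have p_dvd_tt : p ∣ t * (t + 1) := (Nat.dvd_add_right (dvd_pow p_dvd_m two_ne_zero)).mp p_dvd_q
  exact hp.not_dvd_one ((coprime_two_mul_add_one_mul_add_one t).gcd_eq_one ▸
    Nat.dvd_gcd p_dvd_k p_dvd_tt)

lemma Nat.Prime.exists_eq_pow_of_pow_eq_pow {x p e n : ℕ} (hp : p.Prime) (he : e ≠ 0)
    (h : x ^ e = p ^ n) : ∃ a, x = p ^ a ∧ e * a = n := by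
  obtain ⟨a, -, rfl⟩ := (Nat.dvd_prime_pow hp).mp (h ▸ dvd_pow_self x he)
  exact ⟨a, rfl, Nat.pow_right_injective hp.two_le (by simpa [← pow_mul, mul_comm] using h)⟩

theorem odd_k_solution_general (x k p r : ℕ) (hx : 1 < x) (hko : Odd k)
    (hp : p.Prime) (hr : 0 < r)
    (hsum : ∑ i ∈ Finset.range k, (x + i) ^ 3 = p ^ (2 * r)) :
    k = 1 ∧ ∃ c : ℕ, 0 < c ∧ x = p ^ (2 * c) ∧ r = 3 * c := by
  obtain ⟨t, rfl⟩ := hko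
  obtain rfl | ht := Nat.eq_zero_or_pos t
  · have hcube : x ^ 3 = p ^ (2 * r) := by simpa using hsum
    obtain ⟨a, rfl, ha⟩ := hp.exists_eq_pow_of_pow_eq_pow three_ne_zero hcube
    obtain ⟨c, rfl⟩ : 2 ∣ a := by omega
    exact ⟨rfl, c, by omega, rfl, by omega⟩
  · exact absurd hsum (sum_range_two_mul_add_one_add_pow_three_ne_prime_pow (by omega) ht hp)

theorem odd_k_solution (x k p r : ℕ) (hx : 1 < x) (hk : 0 < k) (hko : Odd k)
    (hp : p.Prime) (hr : 0 < r)
    (hsum : ∑ i ∈ Finset.range k, (x + i) ^ 3 = p ^ (2 * r)) :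
    k = 1 ∧ ∃ c : ℕ, 0 < c ∧ x = p ^ (2 * c) ∧ r = 3 * c :=
  odd_k_solution_general x k p r hx hko hp hr hsum
end

section
/- Let a and b be coprime positive integers and let s be a positive integer. If a^2 = b^2 + 2^(2s), then a = b + 2. -/
/-!
Write `a = b + d`. Then `d * (d + 2 * b) = 2 ^ (2 * s)`, so both factors are powers of `2` and the
smaller one, `d`, divides the larger one; hence `d ∣ 2 * b`. Since `gcd (d, b) = gcd (a, b) = 1`,
this forces `d ∣ 2`, and `d = 1` is excluded by parity.
-/

namespace Nat

theorem dvd_of_mul_eq_prime_pow {p d e n : ℕ} (hp : p.Prime) (h : d * e = p ^ n) (hde : d ≤ e) :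
    d ∣ e := by
  obtain ⟨i, -, rfl⟩ := (dvd_prime_pow hp).mp (Dvd.intro e h)
  obtain ⟨j, -, rfl⟩ := (dvd_prime_pow hp).mp (Dvd.intro_left _ h)
  exact pow_dvd_pow p ((pow_le_pow_iff_right₀ hp.one_lt).mp hde)

theorem sub_dvd_two_of_sq_eq_sq_add_prime_pow {p a b n : ℕ} (hp : p.Prime) (hab : a.Coprime b)
    (h : a ^ 2 = b ^ 2 + p ^ n) : a - b ∣ 2 := by
  obtain ⟨d, rfl⟩ : ∃ d, a = b + d :=
    Nat.exists_eq_add_of_le (Nat.pow_le_pow_iff_left two_ne_zero |>.mp (by omega))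
  have hfactor : d * (d + 2 * b) = p ^ n := by
    have : (b + d) ^ 2 = b ^ 2 + d * (d + 2 * b) := by ring
    omega
  have hd : d ∣ 2 * b := by
    simpa using dvd_of_mul_eq_prime_pow hp hfactor (by omega)
  have hcop : d.Coprime b := by simpa [add_comm] using hab
  simpa using hcop.dvd_of_dvd_mul_right hd

end Nat

theorem pythagorean_pow_two_leg_general (a b s : ℕ) (hs : 0 < s)
    (hcop : Nat.Coprime a b) (h : a ^ 2 = b ^ 2 + 2 ^ (2 * s)) : a = b + 2 := by
  have hdiff := Nat.sub_dvd_two_of_sq_eq_sq_add_prime_pow Nat.prime_two hcop h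
  rcases (Nat.dvd_prime Nat.prime_two).mp hdiff with hone | htwo
  · obtain ⟨k, hk⟩ : Even (2 ^ (2 * s)) := Nat.even_pow.mpr ⟨even_two, by omega⟩
    have hsq : (b + 1) ^ 2 = b ^ 2 + (2 * b + 1) := by ring
    rw [show a = b + 1 by omega] at h
    omega
  · omega

theorem pythagorean_pow_two_leg (a b s : ℕ) (ha : 0 < a) (hb : 0 < b) (hs : 0 < s)
    (hcop : Nat.Coprime a b) (h : a ^ 2 = b ^ 2 + 2 ^ (2 * s)) : a = b + 2 :=
  pythagorean_pow_two_leg_general a b s hs hcop h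
end

section
/- Let x > 1 and l be positive integers, set k = 2l − 1, let p be a prime and let r, t be positive integers with x + l − 1 = p^t. If ∑_{i=x}^{x+k-1} i^3 = p^(2r) and v_p((x−1)x/2) < t, then v_p((x−1)x/2) = v_p((x+k−1)(x+k)/2). -/
/-!
The integers `x, …, x + k - 1` sum to `(x + k - 1)(x + k)/2 - (x - 1)x/2`, and for `k = 2l - 1`
this sum is `k (x + l - 1) = k p^t`. So the two triangular numbers differ by a multiple of `p^t`,
which cannot change a `p`-adic valuation smaller than `t`.
-/

theorem padicValNat_add_of_pow_succ_dvd {p a b : ℕ} (ha : a ≠ 0)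
    (hb : p ^ (padicValNat p a + 1) ∣ b) : padicValNat p (a + b) = padicValNat p a := by
  rcases eq_or_ne p 1 with rfl | hp
  · simp
  have hab : a + b ≠ 0 := by omega
  apply le_antisymm
  · by_contra! h
    have hdvd : p ^ (padicValNat p a + 1) ∣ a + b :=
      (padicValNat_dvd_iff_le_of_ne_one hp hab).mpr h
    exact (padicValNat_dvd_iff_le_of_ne_one hp ha).not.mpr (by omega)
      ((Nat.dvd_add_left hb).mp hdvd)
  · exact (padicValNat_dvd_iff_le_of_ne_one hp hab).mp
      (dvd_add pow_padicValNat_dvd (dvd_trans (pow_dvd_pow p le_self_add) hb))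

theorem triangular_add_odd (x l : ℕ) :
    (x + (2 * l - 1) - 1) * (x + (2 * l - 1)) / 2 =
      (x - 1) * x / 2 + (x + l - 1) * (2 * l - 1) := by
  rcases l with _ | m
  · simp
  have hdouble : (x + 2 * m) * (x + 2 * m + 1) = (x - 1) * x + 2 * ((x + m) * (2 * m + 1)) := by
    rcases x with _ | y
    · ring
    · rw [Nat.add_sub_cancel]; ring
  rw [show 2 * (m + 1) - 1 = 2 * m + 1 by omega, show x + (m + 1) - 1 = x + m by omega,
    show x + (2 * m + 1) - 1 = x + 2 * m by omega, ← add_assoc, hdouble,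
    Nat.add_mul_div_left _ _ two_pos]

theorem valuation_eq_of_odd_k_lt_general (x l k p t : ℕ) (hx : 1 < x)
    (hkdef : k = 2 * l - 1)
    (hpt : x + l - 1 = p ^ t)
    (hq : padicValNat p ((x - 1) * x / 2) < t) :
    padicValNat p ((x - 1) * x / 2) = padicValNat p ((x + k - 1) * (x + k) / 2) := by
  have hpos : (x - 1) * x / 2 ≠ 0 := by
    refine (Nat.div_pos ?_ two_pos).ne'
    calc 2 ≤ 1 * x := by omega
      _ ≤ (x - 1) * x := Nat.mul_le_mul_right x (by omega)
  rw [hkdef, triangular_add_odd, hpt,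
    padicValNat_add_of_pow_succ_dvd hpos ((pow_dvd_pow p hq).mul_right _)]

theorem valuation_eq_of_odd_k_lt (x l k p r t : ℕ) (hx : 1 < x) (hl : 0 < l)
    (hkdef : k = 2 * l - 1) (hp : p.Prime) (hr : 0 < r) (ht : 0 < t)
    (hpt : x + l - 1 = p ^ t)
    (hsum : ∑ i ∈ Finset.range k, (x + i) ^ 3 = p ^ (2 * r))
    (hq : padicValNat p ((x - 1) * x / 2) < t) :
    padicValNat p ((x - 1) * x / 2) = padicValNat p ((x + k - 1) * (x + k) / 2) :=
  valuation_eq_of_odd_k_lt_general x l k p t hx hkdef hpt hq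
end

section
/- Let x > 1 and l be positive integers, set k = 2l − 1, let p be a prime and let r, t be positive integers with x + l − 1 = p^t. If ∑_{i=x}^{x+k-1} i^3 = p^(2r) and v_p((x−1)x/2) = t, then l = 1, x = p^t, p is odd, and 2r = 3t. -/
/-!
Writing `l = a + 1` and `n = x + a = p ^ t` for the middle term, the sum of the `2a + 1` cubes
centred at `n` is `(2a + 1) n (n² + a(a + 1))`. Its last factor divides `p ^ (2r)`, so it is a power
of `p` lying in `[p ^ (2t), 2 p ^ (2t))` because `a + 1 < n`; hence it equals `p ^ (2t)` and `a = 0`.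
Then the sum is `x³ = p ^ (3t)`, and `p = 2` is excluded since `v₂((2ᵗ - 1) 2ᵗ / 2) = t - 1`.
-/

theorem sum_range_cube_centered (x a : ℕ) :
    ∑ i ∈ Finset.range (2 * a + 1), (x + i) ^ 3
      = (2 * a + 1) * (x + a) * ((x + a) ^ 2 + a * (a + 1)) := by
  induction a generalizing x with
  | zero => simp; ring
  | succ a ih =>
    rw [show 2 * (a + 1) + 1 = 2 * a + 1 + 1 + 1 by ring, Finset.sum_range_succ,
      Finset.sum_range_succ',
      Finset.sum_congr rfl fun i _ => show (x + (i + 1)) ^ 3 = (x + 1 + i) ^ 3 by ring, ih]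
    ring

theorem Nat.eq_zero_of_pow_add_dvd_pow {p e c m : ℕ} (hp : p.Prime) (hc : c < p ^ e)
    (h : p ^ e + c ∣ p ^ m) : c = 0 := by
  obtain ⟨s, -, hs⟩ := (Nat.dvd_prime_pow hp).mp h
  have hes : e ≤ s := (Nat.pow_le_pow_iff_right hp.one_lt).mp (by omega)
  rcases hes.eq_or_lt with rfl | hlt
  · omega
  · have : p ^ (e + 1) ≤ p ^ s := Nat.pow_le_pow_right hp.pos hlt
    have : 2 * p ^ e ≤ p ^ (e + 1) := by
      rw [pow_succ']; exact Nat.mul_le_mul_right _ hp.two_le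
    omega

theorem padicValNat_two_odd_mul_two_pow {m s : ℕ} (hm : Odd m) :
    padicValNat 2 (m * 2 ^ s) = s := by
  rw [padicValNat.mul hm.pos.ne' (by positivity),
    padicValNat.eq_zero_of_not_dvd hm.not_two_dvd_nat, padicValNat.prime_pow, zero_add]

theorem padicValNat_two_triangle_two_pow {t : ℕ} (ht : 0 < t) :
    padicValNat 2 ((2 ^ t - 1) * 2 ^ t / 2) = t - 1 := by
  obtain ⟨s, rfl⟩ : ∃ s, t = s + 1 := ⟨t - 1, by omega⟩
  have hodd : Odd (2 ^ (s + 1) - 1) :=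
    Nat.Even.sub_odd Nat.one_le_two_pow (Nat.even_pow.mpr ⟨even_two, s.succ_ne_zero⟩) odd_one
  have hhalf : 2 ^ (s + 1) / 2 = 2 ^ s := by rw [pow_succ, Nat.mul_div_cancel _ two_pos]
  rw [Nat.mul_div_assoc _ (dvd_pow_self 2 s.succ_ne_zero), hhalf, Nat.add_sub_cancel]
  exact padicValNat_two_odd_mul_two_pow hodd

theorem odd_k_q_eq_t_general (x l k p r t : ℕ) (hx : 1 < x) (hl : 0 < l)
    (hkdef : k = 2 * l - 1) (hp : p.Prime) (ht : 0 < t)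
    (hpt : x + l - 1 = p ^ t)
    (hsum : ∑ i ∈ Finset.range k, (x + i) ^ 3 = p ^ (2 * r))
    (hq : padicValNat p ((x - 1) * x / 2) = t) :
    l = 1 ∧ x = p ^ t ∧ Odd p ∧ 2 * r = 3 * t := by
  obtain ⟨a, rfl⟩ : ∃ a, l = a + 1 := ⟨l - 1, by omega⟩
  obtain rfl : k = 2 * a + 1 := by omega
  replace hpt : x + a = p ^ t := by omega
  rw [sum_range_cube_centered, hpt] at hsum
  obtain rfl : a = 0 := by
    have hc : a * (a + 1) < p ^ (2 * t) := by
      rw [pow_mul', sq]; exact Nat.mul_lt_mul'' (by omega) (by omega)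
    simpa using Nat.eq_zero_of_pow_add_dvd_pow hp hc
      (Dvd.intro_left _ (by rw [← hsum, pow_mul']))
  obtain rfl : x = p ^ t := hpt
  have h3t : 3 * t = 2 * r := Nat.pow_right_injective hp.two_le
    (show p ^ (3 * t) = p ^ (2 * r) by rw [← hsum]; ring)
  have hp2 : p ≠ 2 := by
    rintro rfl
    rw [padicValNat_two_triangle_two_pow ht] at hq
    omega
  exact ⟨rfl, rfl, hp.odd_of_ne_two hp2, h3t.symm⟩

theorem odd_k_q_eq_t (x l k p r t : ℕ) (hx : 1 < x) (hl : 0 < l)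
    (hkdef : k = 2 * l - 1) (hp : p.Prime) (hr : 0 < r) (ht : 0 < t)
    (hpt : x + l - 1 = p ^ t)
    (hsum : ∑ i ∈ Finset.range k, (x + i) ^ 3 = p ^ (2 * r))
    (hq : padicValNat p ((x - 1) * x / 2) = t) :
    l = 1 ∧ x = p ^ t ∧ Odd p ∧ 2 * r = 3 * t :=
  odd_k_q_eq_t_general x l k p r t hx hl hkdef hp ht hpt hsum hq
end
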